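/- arXiv:1705.07597 — 2 statements merged into one kernel-verified Lean document; each statement's English description precedes it below -/
import Mathlib

section
/- Let H be a Hermitian d×d complex matrix whose spectrum is generic, and let A, B, C, D be d×d complex matrices. Then lim_{τ→∞} (1/τ) ∫₀^τ ⟨A e^{iHt} B e^{−iHt} C e^{iHt} D e^{−iHt}⟩ dt = (1/d) Σ_{j,k} A_{jj} B_{jk} C_{kk} D_{kj} + (1/d) Σ_{j,k} A_{jk} B_{kk} C_{kj} D_{jj} − (1/d) Σ_j A_{jj} B_{jj} C_{jj} D_{jj}. -/
open Matrix Filter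
open scoped Classical

/-- normalized trace -/
noncomputable def nTrace {d : ℕ} (X : Matrix (Fin d) (Fin d) ℂ) : ℂ := X.trace / d

/-- Heisenberg time evolution X ↦ e^{iHt} X e^{-iHt} -/
noncomputable def timeEv {d : ℕ} (H : Matrix (Fin d) (Fin d) ℂ) (t : ℝ)
    (X : Matrix (Fin d) (Fin d) ℂ) : Matrix (Fin d) (Fin d) ℂ :=
  NormedSpace.exp ((Complex.I * t) • H) * X * NormedSpace.exp ((-(Complex.I * t)) • H)

/-- A family of eigenvalues is generic if `E p + E r = E q + E s` only for trivial reasons. -/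
def GenericSpectrum {ι : Type*} (E : ι → ℝ) : Prop :=
  ∀ p q r s : ι, E p + E r = E q + E s → (p = q ∧ r = s) ∨ (p = s ∧ r = q)

/-!
Diagonalising `H = U diag(E) Uᴴ`, the integrand becomes a finite sum of terms
`A'_{jk} B'_{kl} C'_{lm} D'_{mj} e^{i(E_k - E_l + E_m - E_j)t} / d` (primes denote matrix
elements in the eigenbasis). The long-time average of `e^{iωt}` is `1` if `ω = 0` and `0`
otherwise, so only zero-frequency terms survive. For a generic spectrum the frequency vanishes
exactly on the two pairings `k = l, m = j` and `k = j, m = l`, and inclusion–exclusion over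
their overlap `j = k = l = m` gives the three sums.
-/

section
open Complex

theorem tendsto_avg_integral_exp_I_mul (ω : ℝ) :
    Tendsto (fun τ : ℝ => (τ : ℂ)⁻¹ * ∫ t in (0:ℝ)..τ, exp (I * ω * t)) atTop
      (nhds (if ω = 0 then 1 else 0)) := by
  rcases eq_or_ne ω 0 with rfl | hω
  · refine tendsto_const_nhds.congr' ?_
    filter_upwards [eventually_ne_atTop 0] with τ hτ
    simp [hτ]
  · have hIω : I * ω ≠ 0 := by simp [hω]
    simp only [hω, if_false, integral_exp_mul_complex hIω, ofReal_zero, mul_zero, exp_zero]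
    have h_inv : Tendsto (fun τ : ℝ => (τ : ℂ)⁻¹) atTop (nhds 0) := by
      simpa [Function.comp_def] using (continuous_ofReal.tendsto 0).comp tendsto_inv_atTop_zero
    refine h_inv.zero_mul_isBoundedUnder_le (isBoundedUnder_of ⟨2 / ‖I * ω‖, fun τ => ?_⟩)
    simp only [Function.comp, norm_div]
    gcongr
    calc ‖exp (I * ω * τ) - 1‖ ≤ ‖exp (I * ω * τ)‖ + ‖(1 : ℂ)‖ := norm_sub_le _ _
      _ = 2 := by
        rw [mul_assoc, ← ofReal_mul, norm_exp_I_mul_ofReal]; norm_num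

theorem tendsto_avg_integral_sum_mul_exp_I_mul {ι : Type*} [Fintype ι] (c : ι → ℂ)
    (ω : ι → ℝ) :
    Tendsto (fun τ : ℝ => (τ : ℂ)⁻¹ * ∫ t in (0:ℝ)..τ, ∑ i, c i * exp (I * ω i * t)) atTop
      (nhds (∑ i, if ω i = 0 then c i else 0)) := by
  have h_avg_sum : ∀ τ : ℝ, (τ : ℂ)⁻¹ * ∫ t in (0:ℝ)..τ, ∑ i, c i * exp (I * ω i * t)
      = ∑ i, c i * ((τ : ℂ)⁻¹ * ∫ t in (0:ℝ)..τ, exp (I * ω i * t)) := by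
    intro τ
    rw [intervalIntegral.integral_finsetSum fun i _ => by
      apply Continuous.intervalIntegrable; fun_prop]
    simp only [intervalIntegral.integral_const_mul, Finset.mul_sum]
    ring_nf
  simp only [h_avg_sum]
  exact tendsto_finsetSum _ fun i _ => by
    simpa using (tendsto_avg_integral_exp_I_mul (ω i)).const_mul (c i)

theorem exp_smul_unitary_conj_diagonal {n : Type*} [Fintype n] [DecidableEq n]
    {U : Matrix n n ℂ} (hU : U ∈ unitaryGroup n ℂ) (E : n → ℂ) (c : ℂ) :
    NormedSpace.exp (c • (U * diagonal E * Uᴴ))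
      = U * diagonal (fun j => exp (c * E j)) * Uᴴ := by
  have hconj := Matrix.exp_units_conj (Unitary.toUnits ⟨U, hU⟩) (diagonal (c • E))
  rw [Matrix.exp_diagonal] at hconj
  convert hconj using 2
  · rw [diagonal_smul, Matrix.mul_smul, Matrix.smul_mul]; rfl
  · ext1 j; simp [exp_eq_exp_ℂ]
  · rfl

theorem trace_mul_mul_mul_unitary_conj {n α : Type*} [Fintype n] [DecidableEq n] [CommRing α]
    [StarRing α] {U : Matrix n n α} (hU : U ∈ unitaryGroup n α) (A B C D : Matrix n n α) :
    ((Uᴴ * A * U) * (Uᴴ * B * U) * (Uᴴ * C * U) * (Uᴴ * D * U)).trace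
      = (A * B * C * D).trace := by
  have hU' : ∀ X : Matrix n n α, U * (Uᴴ * X) = X := fun X => by
    rw [← Matrix.mul_assoc, ← star_eq_conjTranspose, Unitary.mul_star_self_of_mem hU,
      Matrix.one_mul]
  simp only [Matrix.mul_assoc, hU']
  rw [trace_mul_comm]
  simp only [Matrix.mul_assoc, ← star_eq_conjTranspose, Unitary.mul_star_self_of_mem hU,
    Matrix.mul_one]

theorem trace_mul_mul_mul_eq_sum {n R : Type*} [Fintype n] [CommSemiring R]
    (W X Y Z : Matrix n n R) :
    (W * X * Y * Z).trace = ∑ j, ∑ k, ∑ l, ∑ m, W j k * X k l * Y l m * Z m j := by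
  simp only [Matrix.trace, Matrix.diag, Matrix.mul_apply, Finset.sum_mul]
  refine Finset.sum_congr rfl fun j _ => ?_
  refine (Finset.sum_congr rfl fun m _ => Finset.sum_comm).trans ?_
  rw [Finset.sum_comm]
  exact Finset.sum_congr rfl fun k _ => Finset.sum_comm

theorem conjTranspose_mul_timeEv_mul {d : ℕ} {U : Matrix (Fin d) (Fin d) ℂ}
    (hU : U ∈ unitaryGroup (Fin d) ℂ) (E : Fin d → ℝ) (t : ℝ) (X : Matrix (Fin d) (Fin d) ℂ) :
    Uᴴ * timeEv (U * diagonal (fun j => (E j : ℂ)) * Uᴴ) t X * U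
      = diagonal (fun j => exp (I * t * E j)) * (Uᴴ * X * U)
          * diagonal (fun j => exp (-(I * t) * E j)) := by
  have hU' : ∀ Y : Matrix (Fin d) (Fin d) ℂ, Uᴴ * (U * Y) = Y := fun Y => by
    rw [← Matrix.mul_assoc, ← star_eq_conjTranspose, Unitary.star_mul_self_of_mem hU,
      Matrix.one_mul]
  rw [timeEv, exp_smul_unitary_conj_diagonal hU, exp_smul_unitary_conj_diagonal hU]
  simp only [Matrix.mul_assoc, hU']
  simp only [← Matrix.mul_assoc, ← star_eq_conjTranspose, Unitary.star_mul_self_of_mem hU,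
    Matrix.mul_one]

theorem nTrace_mul_timeEv_mul_timeEv {d : ℕ} {U : Matrix (Fin d) (Fin d) ℂ}
    (hU : U ∈ unitaryGroup (Fin d) ℂ) (E : Fin d → ℝ) (A B C D : Matrix (Fin d) (Fin d) ℂ)
    (t : ℝ) :
    nTrace (A * timeEv (U * diagonal (fun j => (E j : ℂ)) * Uᴴ) t B * C
        * timeEv (U * diagonal (fun j => (E j : ℂ)) * Uᴴ) t D)
      = (∑ j, ∑ k, ∑ l, ∑ m, (Uᴴ * A * U) j k * (Uᴴ * B * U) k l * (Uᴴ * C * U) l m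
          * (Uᴴ * D * U) m j * exp (I * (E k - E l + E m - E j : ℝ) * t)) / d := by
  rw [nTrace, ← trace_mul_mul_mul_unitary_conj hU, conjTranspose_mul_timeEv_mul hU,
    conjTranspose_mul_timeEv_mul hU, trace_mul_mul_mul_eq_sum]
  refine congrArg (· / (d : ℂ)) ?_
  refine Fintype.sum_congr _ _ fun j => Fintype.sum_congr _ _ fun k => ?_
  refine Fintype.sum_congr _ _ fun l => Fintype.sum_congr _ _ fun m => ?_
  simp only [mul_diagonal, diagonal_mul]
  rw [show I * ((E k - E l + E m - E j : ℝ) : ℂ) * t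
      = I * t * E k + -(I * t) * E l + I * t * E m + -(I * t) * E j by push_cast; ring]
  simp only [exp_add]
  ring

end

theorem GenericSpectrum.sub_add_sub_eq_zero_iff {ι : Type*} {E : ι → ℝ}
    (hE : GenericSpectrum E) {j k l m : ι} :
    E k - E l + E m - E j = 0 ↔ (k = l ∧ m = j) ∨ (k = j ∧ m = l) := by
  constructor
  · intro h
    exact hE k l m j (by linarith)
  · rintro (⟨rfl, rfl⟩ | ⟨rfl, rfl⟩) <;> ring

theorem sum_ite_pairing_eq {ι M : Type*} [Fintype ι] [DecidableEq ι] [AddCommGroup M]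
    (f : ι → ι → ι → ι → M) :
    ∑ j, ∑ k, ∑ l, ∑ m, (if (k = l ∧ m = j) ∨ (k = j ∧ m = l) then f j k l m else 0)
      = ∑ j, ∑ k, f j k k j + ∑ j, ∑ k, f j j k k - ∑ j, f j j j j := by
  have h_incl_excl : ∀ j k l m,
      (if (k = l ∧ m = j) ∨ (k = j ∧ m = l) then f j k l m else 0)
        = (if k = l ∧ m = j then f j k l m else 0) + (if k = j ∧ m = l then f j k l m else 0)
          - (if k = j ∧ l = j ∧ m = j then f j k l m else 0) := by
    intro j k l m
    split_ifs <;> grind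
  simp only [h_incl_excl, Finset.sum_add_distrib, Finset.sum_sub_distrib]
  simp [ite_and]

theorem stmt3 (d : ℕ) (H : Matrix (Fin d) (Fin d) ℂ)
    (U : Matrix (Fin d) (Fin d) ℂ) (hU : U ∈ Matrix.unitaryGroup (Fin d) ℂ)
    (E : Fin d → ℝ) (hH : H = U * Matrix.diagonal (fun j => (E j : ℂ)) * Uᴴ)
    (hgen : GenericSpectrum E)
    (A B C D : Matrix (Fin d) (Fin d) ℂ) :
    Tendsto (fun τ : ℝ => (τ : ℂ)⁻¹ * ∫ t in (0:ℝ)..τ,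
        nTrace (A * timeEv H t B * C * timeEv H t D)) atTop
      (nhds ((1 / d) * ∑ j : Fin d, ∑ k : Fin d,
          (Uᴴ * A * U) j j * (Uᴴ * B * U) j k * (Uᴴ * C * U) k k * (Uᴴ * D * U) k j
        + (1 / d) * ∑ j : Fin d, ∑ k : Fin d,
          (Uᴴ * A * U) j k * (Uᴴ * B * U) k k * (Uᴴ * C * U) k j * (Uᴴ * D * U) j j
        - (1 / d) * ∑ j : Fin d,
          (Uᴴ * A * U) j j * (Uᴴ * B * U) j j * (Uᴴ * C * U) j j * (Uᴴ * D * U) j j)) := by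
  subst hH
  simp only [nTrace_mul_timeEv_mul_timeEv hU, intervalIntegral.integral_div, ← mul_div_assoc]
  have hlim := (tendsto_avg_integral_sum_mul_exp_I_mul
    (fun q : Fin d × Fin d × Fin d × Fin d => (Uᴴ * A * U) q.1 q.2.1
      * (Uᴴ * B * U) q.2.1 q.2.2.1 * (Uᴴ * C * U) q.2.2.1 q.2.2.2 * (Uᴴ * D * U) q.2.2.2 q.1)
    (fun q => E q.2.1 - E q.2.2.1 + E q.2.2.2 - E q.1)).div_const (d : ℂ)
  simp only [Fintype.sum_prod_type, hgen.sub_add_sub_eq_zero_iff, sum_ite_pairing_eq] at hlim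
  convert hlim using 2
  ring
end

section
/- Let h be a fixed nonzero Hermitian traceless 4×4 matrix with ‖h‖ ≤ 1, and for each n ≥ 3 let H = Σ_{i∈ℤ/nℤ} H_i be the translation-invariant nearest-neighbor Hamiltonian on n qubits generated by h; assume tr(H_i H_j) = 0 for all i ≠ j. Then for every positive even integer m there exist constants c_m, C_m > 0 such that for all n ≥ 3: c_m n^{m/2} ≤ tr(H^m)/2^n ≤ C_m n^{m/2}. (One may take c_m = ⟨H_1²⟩^{m/2} where ⟨X⟩ := tr(X)/2^n.) -/
open Matrix Filter Finset
open scoped Classical ComplexOrder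

/-- computational basis configurations of `n` qubits -/
abbrev Cfg (n : ℕ) := Fin n → Fin 2

/-- the site following `i` in the cyclic order on `ℤ/nℤ` -/
def nxt {n : ℕ} (i : Fin n) : Fin n :=
  ⟨(i.1 + 1) % n, Nat.mod_lt _ (Nat.lt_of_le_of_lt (Nat.zero_le _) i.2)⟩

/-- the operator acting as the 4×4 matrix `h` on the two neighboring sites `i, i+1`
and as the identity elsewhere -/
noncomputable def twoSite (n : ℕ) (i : Fin n)
    (h : Matrix (Fin 2 × Fin 2) (Fin 2 × Fin 2) ℂ) : Matrix (Cfg n) (Cfg n) ℂ :=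
  fun x y =>
    if ∀ j : Fin n, j ≠ i → j ≠ nxt i → x j = y j then
      h (x i, x (nxt i)) (y i, y (nxt i))
    else 0

/-- the translation-invariant nearest-neighbor Hamiltonian generated by `h` -/
noncomputable def ham (h : Matrix (Fin 2 × Fin 2) (Fin 2 × Fin 2) ℂ) (n : ℕ) :
    Matrix (Cfg n) (Cfg n) ℂ :=
  ∑ i : Fin n, twoSite n i h

/-- the ℓ²→ℓ² operator norm of a matrix -/
noncomputable def opNorm {d : Type*} [Fintype d] [DecidableEq d] (X : Matrix d d ℂ) : ℝ :=
  ‖LinearMap.toContinuousLinearMap (Matrix.toEuclideanLin X)‖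

/-!
Expand `H ^ m` as a sum of words `H_{f 0} ⋯ H_{f (m - 1)}`, `f : Fin m → ℤ/nℤ`. If some letter
`f k` is at cyclic distance at least two from all other letters, the other factors act as the
identity on the sites `f k, f k + 1`, and cycling the trace gives `tr (H_{f k} X) = tr h · tr Y`,
which vanishes. In every surviving word each letter has a partner at distance at most one. Call a
letter fresh if it is at distance more than two from all earlier letters: the partner of a fresh
letter is not fresh, and distinct fresh letters have distinct partners, so at most `m / 2` letters
are fresh. A surviving word is determined by its fresh letters and, for every other letter, an
earlier letter within distance two together with the offset, so there are `O(n ^ (m / 2))` such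
words; each has trace at most `2 ^ n ‖h‖ ^ m`, measuring `h` in the ℓ∞ operator norm.

The lower bound is Jensen's inequality `(tr (H ^ 2) / 2 ^ n) ^ (m / 2) ≤ tr (H ^ m) / 2 ^ n` for
the eigenvalues of `H`, with `tr (H ^ 2) = n 2 ^ (n - 2) tr (h ^ 2)` by the orthogonality
hypothesis.
-/

open scoped Kronecker

theorem sum_pow_eq_sum_prod_ofFn {R ι : Type*} [Semiring R] [Fintype ι] (a : ι → R) (m : ℕ) :
    (∑ i, a i) ^ m = ∑ f : Fin m → ι, (List.ofFn fun k => a (f k)).prod := by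
  induction m with
  | zero => simp
  | succ m ih =>
    rw [pow_succ', ih, Finset.sum_mul_sum, ← (Fin.consEquiv fun _ => ι).sum_comp,
      Fintype.sum_prod_type]
    simp [List.ofFn_succ]

theorem pow_sum_div_card_le_sum_pow_div_card {ι α : Type*} [Semifield α] [LinearOrder α]
    [IsStrictOrderedRing α] [ExistsAddOfLE α] {s : Finset ι} {f : ι → α}
    (hf : ∀ i ∈ s, 0 ≤ f i) (k : ℕ) :
    ((∑ i ∈ s, f i) / #s) ^ (k + 1) ≤ (∑ i ∈ s, f i ^ (k + 1)) / #s := by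
  rw [div_pow, pow_succ (#s : α), ← div_div]
  exact div_le_div_of_nonneg_right (pow_sum_div_card_le_sum_pow hf k) (Nat.cast_nonneg _)

namespace Matrix

theorem trace_reindex {ι κ R : Type*} [Fintype ι] [Fintype κ] [AddCommMonoid R] (e : ι ≃ κ)
    (A : Matrix ι ι R) : (reindex e e A).trace = A.trace := by
  simp only [trace, diag, reindex_apply, submatrix_apply]
  exact e.symm.sum_comp fun i => A i i

theorem exists_mem_trace_list_prod_eq {d R : Type*} [Fintype d] [DecidableEq d] [CommSemiring R]
    {S : Submonoid (Matrix d d R)} (L : List (Matrix d d R)) (k : ℕ) (hk : k < L.length)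
    (hS : ∀ j (hj : j < L.length), j ≠ k → L[j] ∈ S) :
    ∃ Y ∈ S, L.prod.trace = (L[k] * Y).trace := by
  refine ⟨(L.drop (k + 1)).prod * (L.take k).prod, mul_mem
    (Submonoid.list_prod_mem _ fun x hx => ?_) (Submonoid.list_prod_mem _ fun x hx => ?_), ?_⟩
  · obtain ⟨j, hj, rfl⟩ := List.mem_iff_getElem.1 hx
    rw [List.getElem_drop]
    exact hS _ _ (by omega)
  · obtain ⟨j, hj, rfl⟩ := List.mem_iff_getElem.1 hx
    rw [List.getElem_take]
    exact hS _ _ (by simp only [List.length_take] at hj; omega)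
  · rw [← L.prod_take_mul_prod_drop (k + 1), L.prod_take_succ k hk, trace_mul_cycle,
      trace_mul_comm]

theorem IsHermitian.trace_pow {𝕜 ι : Type*} [RCLike 𝕜] [Fintype ι] [DecidableEq ι]
    {A : Matrix ι ι 𝕜} (hA : A.IsHermitian) (k : ℕ) :
    (A ^ k).trace = ((∑ i, hA.eigenvalues i ^ k : ℝ) : 𝕜) := by
  conv_lhs => rw [hA.spectral_theorem, ← map_pow, Unitary.conjStarAlgAut_apply, trace_mul_cycle,
    Unitary.coe_star_mul_self, one_mul, diagonal_pow, trace_diagonal]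
  simp

theorem IsHermitian.exists_pos_trace_mul_self {𝕜 ι : Type*} [RCLike 𝕜] [Fintype ι]
    {A : Matrix ι ι 𝕜} (hA : A.IsHermitian) (hA₀ : A ≠ 0) :
    ∃ a : ℝ, 0 < a ∧ (A * A).trace = a := by
  have hpos : 0 < (Aᴴ * A).trace := (posSemidef_conjTranspose_mul_self A).trace_nonneg.lt_of_ne'
    (trace_conjTranspose_mul_self_eq_zero_iff.not.2 hA₀)
  obtain ⟨a, ha, hA⟩ := RCLike.pos_iff_exists_ofReal.1 (hA.eq ▸ hpos)
  exact ⟨a, ha, hA.symm⟩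

section LinftyOpNorm

attribute [local instance] Matrix.linftyOpSeminormedAddCommGroup

variable {α ι κ ι' κ' : Type*} [Fintype ι] [Fintype κ] [Fintype ι'] [Fintype κ']
  [SeminormedRing α]

theorem linfty_opNorm_reindex (e : ι ≃ ι') (e' : κ ≃ κ') (A : Matrix ι κ α) :
    ‖reindex e e' A‖ = ‖A‖ := by
  simp only [linfty_opNorm_def, reindex_apply, submatrix_apply]
  rw [← Finset.map_univ_equiv e.symm, Finset.sup_map]
  exact congrArg _ (congrArg _ (funext fun i => e'.symm.sum_comp fun j => ‖A (e.symm i) j‖₊))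

theorem linfty_opNorm_kronecker_le (A : Matrix ι κ α) (B : Matrix ι' κ' α) :
    ‖A ⊗ₖ B‖ ≤ ‖A‖ * ‖B‖ := by
  simp only [linfty_opNorm_def, ← NNReal.coe_mul, NNReal.coe_le_coe]
  refine Finset.sup_le fun ⟨i, i'⟩ _ => ?_
  calc ∑ j : κ × κ', ‖(A ⊗ₖ B) (i, i') j‖₊
      ≤ ∑ j : κ × κ', ‖A i j.1‖₊ * ‖B i' j.2‖₊ :=
        Finset.sum_le_sum fun j _ => by rw [kronecker_apply]; exact nnnorm_mul_le _ _
    _ = (∑ j, ‖A i j‖₊) * ∑ j', ‖B i' j'‖₊ := by rw [Fintype.sum_prod_type, Finset.sum_mul_sum]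
    _ ≤ _ := mul_le_mul' (Finset.le_sup (f := fun i => ∑ j, ‖A i j‖₊) (Finset.mem_univ i))
        (Finset.le_sup (f := fun i => ∑ j, ‖B i j‖₊) (Finset.mem_univ i'))

theorem norm_trace_le_card_mul_linfty_opNorm (A : Matrix ι ι α) :
    ‖A.trace‖ ≤ Fintype.card ι * ‖A‖ := by
  have hdiag (i : ι) : ‖A i i‖ ≤ ‖A‖ := by
    rw [linfty_opNorm_def]
    calc ‖A i i‖ ≤ ∑ j, ‖A i j‖₊ :=
          Finset.single_le_sum (f := fun j => ‖A i j‖₊) (fun _ _ => bot_le) (Finset.mem_univ i)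
      _ ≤ _ := NNReal.coe_le_coe.2
          (Finset.le_sup (f := fun i => ∑ j, ‖A i j‖₊) (Finset.mem_univ i))
  calc ‖A.trace‖ ≤ ∑ i, ‖A i i‖ := norm_sum_le _ _
    _ ≤ ∑ _i : ι, ‖A‖ := Finset.sum_le_sum fun i _ => hdiag i
    _ = Fintype.card ι * ‖A‖ := by simp

end LinftyOpNorm

end Matrix

section Split

variable {n : ℕ}

lemma nxt_ne_self (hn : 2 ≤ n) (i : Fin n) : nxt i ≠ i := by
  simp only [nxt, Ne, Fin.ext_iff]
  rcases Nat.lt_or_ge (i.1 + 1) n with h | h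
  · rw [Nat.mod_eq_of_lt h]; omega
  · rw [show i.1 + 1 = n by omega, Nat.mod_self]; omega

abbrev Rest (i : Fin n) := {j : Fin n // j ≠ i ∧ j ≠ nxt i}

lemma card_rest (hn : 2 ≤ n) (i : Fin n) : Fintype.card (Rest i) = n - 2 := by
  simp only [Fintype.card_subtype, ne_eq, filter_and, filter_ne', erase_inter, univ_inter,
    mem_erase, (nxt_ne_self hn i).symm, not_false_eq_true, mem_univ, and_self, card_erase_of_mem,
    card_univ, Fintype.card_fin]
  omega

def splitAt (hn : 2 ≤ n) (i : Fin n) : Cfg n ≃ (Fin 2 × Fin 2) × (Rest i → Fin 2) where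
  toFun x := ((x i, x (nxt i)), fun j => x j)
  invFun pr j :=
    if hi : j = i then pr.1.1 else if hni : j = nxt i then pr.1.2 else pr.2 ⟨j, hi, hni⟩
  left_inv x := by
    funext j
    by_cases hi : j = i
    · subst hi; simp
    · by_cases hni : j = nxt i
      · subst hni; simp [hi]
      · simp [hi, hni]
  right_inv pr := by
    ext j
    · simp
    · simp [nxt_ne_self hn i]
    · simp [j.2.1, j.2.2]

@[simp]
lemma splitAt_symm_apply_self (hn : 2 ≤ n) (i : Fin n)
    (pr : (Fin 2 × Fin 2) × (Rest i → Fin 2)) : (splitAt hn i).symm pr i = pr.1.1 := by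
  simp [splitAt]

@[simp]
lemma splitAt_symm_apply_nxt (hn : 2 ≤ n) (i : Fin n)
    (pr : (Fin 2 × Fin 2) × (Rest i → Fin 2)) : (splitAt hn i).symm pr (nxt i) = pr.1.2 := by
  simp [splitAt, nxt_ne_self hn i]

lemma splitAt_symm_apply_of_ne (hn : 2 ≤ n) {i j : Fin n} (hi : j ≠ i) (hni : j ≠ nxt i)
    (pr : (Fin 2 × Fin 2) × (Rest i → Fin 2)) :
    (splitAt hn i).symm pr j = pr.2 ⟨j, hi, hni⟩ := by
  simp [splitAt, hi, hni]

lemma twoSite_eq_reindex (hn : 2 ≤ n) (i : Fin n)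
    (g : Matrix (Fin 2 × Fin 2) (Fin 2 × Fin 2) ℂ) :
    twoSite n i g = reindex (splitAt hn i).symm (splitAt hn i).symm (g ⊗ₖ 1) := by
  ext x y
  simp [twoSite, splitAt, one_apply, funext_iff]

lemma reindex_splitAt_mul (hn : 2 ≤ n) (i : Fin n) (X X' : Matrix (Cfg n) (Cfg n) ℂ) :
    reindex (splitAt hn i) (splitAt hn i) (X * X') =
      reindex (splitAt hn i) (splitAt hn i) X * reindex (splitAt hn i) (splitAt hn i) X' := by
  rw [← coe_reindexAlgEquiv ℂ ℂ, map_mul]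

def trivialOnPair (hn : 2 ≤ n) (i : Fin n) : Submonoid (Matrix (Cfg n) (Cfg n) ℂ) where
  carrier := {X | ∃ Y, reindex (splitAt hn i) (splitAt hn i) X = 1 ⊗ₖ Y}
  one_mem' := ⟨1, by simp⟩
  mul_mem' := by
    rintro X X' ⟨Y, hY⟩ ⟨Y', hY'⟩
    exact ⟨Y * Y', by rw [reindex_splitAt_mul, hY, hY', ← mul_kronecker_mul, one_mul]⟩

lemma trace_twoSite_mul_eq_zero (hn : 2 ≤ n) (i : Fin n)
    {g : Matrix (Fin 2 × Fin 2) (Fin 2 × Fin 2) ℂ} (hg : g.trace = 0)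
    {X : Matrix (Cfg n) (Cfg n) ℂ} (hX : X ∈ trivialOnPair hn i) :
    (twoSite n i g * X).trace = 0 := by
  obtain ⟨Y, hY⟩ := hX
  rw [← trace_reindex (splitAt hn i), reindex_splitAt_mul, hY, twoSite_eq_reindex hn]
  simp [← mul_kronecker_mul, trace_kronecker, hg]

lemma twoSite_mem_trivialOnPair (hn : 2 ≤ n) {i j : Fin n}
    (h₁ : j ≠ i) (h₂ : j ≠ nxt i) (h₃ : nxt j ≠ i) (h₄ : nxt j ≠ nxt i)
    (g : Matrix (Fin 2 × Fin 2) (Fin 2 × Fin 2) ℂ) : twoSite n j g ∈ trivialOnPair hn i := by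
  refine ⟨of fun r s =>
    twoSite n j g ((splitAt hn i).symm ((0, 0), r)) ((splitAt hn i).symm ((0, 0), s)), ?_⟩
  have agree_iff : ∀ p q r s, (∀ k, k ≠ j → k ≠ nxt j →
      (splitAt hn i).symm (p, r) k = (splitAt hn i).symm (q, s) k) ↔
      p = q ∧ ∀ k : Rest i, k.1 ≠ j → k.1 ≠ nxt j → r k = s k := by
    refine fun p q r s => ⟨fun H => ⟨Prod.ext ?_ ?_, fun k hk₁ hk₂ => ?_⟩, ?_⟩
    · simpa using H i h₁.symm h₃.symm
    · simpa using H (nxt i) h₂.symm h₄.symm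
    · simpa [splitAt_symm_apply_of_ne hn k.2.1 k.2.2] using H k hk₁ hk₂
    · rintro ⟨rfl, H⟩ k hk₁ hk₂
      by_cases hi : k = i
      · subst hi; simp
      by_cases hni : k = nxt i
      · subst hni; simp
      simpa [splitAt_symm_apply_of_ne hn hi hni] using H ⟨k, hi, hni⟩ hk₁ hk₂
  ext ⟨p, r⟩ ⟨q, s⟩
  by_cases hpq : p = q
  · subst hpq
    simp [twoSite, agree_iff, splitAt_symm_apply_of_ne hn h₁ h₂, splitAt_symm_apply_of_ne hn h₃ h₄]
  · simp [twoSite, agree_iff, hpq]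

end Split

section Cyclic

variable {n : ℕ}

def toZMod (i : Fin n) : ZMod n := (i : ℕ)

lemma toZMod_injective : Function.Injective (toZMod : Fin n → ZMod n) := by
  intro a b hab
  have := congrArg ZMod.val hab
  rwa [toZMod, toZMod, ZMod.val_natCast_of_lt a.2, ZMod.val_natCast_of_lt b.2, Fin.val_inj] at this

lemma toZMod_nxt (i : Fin n) : toZMod (nxt i) = toZMod i + 1 := by
  simp [toZMod, nxt, ZMod.natCast_mod]

def Near (s : ℕ) (a b : ZMod n) : Prop := ∃ t : ℤ, |t| ≤ s ∧ b = a + t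

lemma Near.symm {s : ℕ} {a b : ZMod n} (h : Near s a b) : Near s b a := by
  obtain ⟨t, ht, rfl⟩ := h
  exact ⟨-t, by rwa [abs_neg], by push_cast; ring⟩

lemma Near.mono {s s' : ℕ} (hss' : s ≤ s') {a b : ZMod n} (h : Near s a b) : Near s' a b := by
  obtain ⟨t, ht, rfl⟩ := h
  exact ⟨t, ht.trans (by exact_mod_cast hss'), rfl⟩

lemma Near.trans {s s' : ℕ} {a b c : ZMod n} (h : Near s a b) (h' : Near s' b c) :
    Near (s + s') a c := by
  obtain ⟨t, ht, rfl⟩ := h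
  obtain ⟨t', ht', rfl⟩ := h'
  exact ⟨t + t', (abs_add_le t t').trans (by push_cast; linarith), by push_cast; ring⟩

lemma pairs_disjoint_of_not_near {i j : Fin n} (h : ¬ Near 1 (toZMod i) (toZMod j)) :
    j ≠ i ∧ j ≠ nxt i ∧ nxt j ≠ i ∧ nxt j ≠ nxt i := by
  refine ⟨?_, ?_, ?_, fun he => h ⟨0, by simp, ?_⟩⟩
  · rintro rfl; exact h ⟨0, by simp, by simp⟩
  · rintro rfl; exact h ⟨1, by simp, by simp [toZMod_nxt]⟩
  · rintro rfl; exact h ⟨-1, by simp, by simp [toZMod_nxt]⟩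
  · simpa [toZMod_nxt] using congrArg toZMod he

end Cyclic

section Words

variable {n : ℕ} (h : Matrix (Fin 2 × Fin 2) (Fin 2 × Fin 2) ℂ)

noncomputable def word {m : ℕ} (f : Fin m → Fin n) : Matrix (Cfg n) (Cfg n) ℂ :=
  (List.ofFn fun k => twoSite n (f k) h).prod

lemma ham_pow_eq_sum_word (m : ℕ) : ham h n ^ m = ∑ f : Fin m → Fin n, word h f :=
  sum_pow_eq_sum_prod_ofFn _ m

def IsPaired {m : ℕ} (f : Fin m → Fin n) : Prop :=
  ∀ k, ∃ l ≠ k, Near 1 (toZMod (f k)) (toZMod (f l))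

variable {h}

lemma trace_word_eq_zero (hn : 2 ≤ n) (htr : h.trace = 0) {m : ℕ} {f : Fin m → Fin n}
    (hf : ¬ IsPaired f) : (word h f).trace = 0 := by
  simp only [IsPaired, not_forall, not_exists, not_and] at hf
  obtain ⟨k, hk⟩ := hf
  have hrest (l : Fin m) (hl : l ≠ k) : twoSite n (f l) h ∈ trivialOnPair hn (f k) := by
    obtain ⟨h₁, h₂, h₃, h₄⟩ := pairs_disjoint_of_not_near (hk l hl)
    exact twoSite_mem_trivialOnPair hn h₁ h₂ h₃ h₄ h
  obtain ⟨Y, hY, htrace⟩ := exists_mem_trace_list_prod_eq (List.ofFn fun k => twoSite n (f k) h)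
    k (by simp) fun j hj hjk => by simpa using hrest ⟨j, by simpa using hj⟩ (by simpa [Fin.ext_iff])
  rw [word, htrace, List.getElem_ofFn]
  exact trace_twoSite_mul_eq_zero hn _ htr hY

lemma trace_ham_pow_eq_sum_isPaired (hn : 2 ≤ n) (htr : h.trace = 0) (m : ℕ) :
    (ham h n ^ m).trace = ∑ f : Fin m → Fin n with IsPaired f, (word h f).trace := by
  rw [ham_pow_eq_sum_word, trace_sum]
  exact (Finset.sum_filter_of_ne fun f _ hf =>
    not_not.1 fun hp => hf (trace_word_eq_zero hn htr hp)).symm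

end Words

section Counting

variable {n m : ℕ}

def IsFresh (f : Fin m → Fin n) (k : Fin m) : Prop :=
  ∀ l < k, ¬ Near 2 (toZMod (f l)) (toZMod (f k))

lemma two_mul_card_isFresh_le {f : Fin m → Fin n} (hf : IsPaired f) :
    2 * #{k | IsFresh f k} ≤ m := by
  choose p hpk hnear using hf
  have hp_not_fresh (k : Fin m) (hk : IsFresh f k) : ¬ IsFresh f (p k) := fun hpk' => by
    rcases (hpk k).lt_or_gt with hlt | hlt
    · exact hk _ hlt ((hnear k).symm.mono (by omega))
    · exact hpk' _ hlt ((hnear k).mono (by omega))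
  have hp_inj : Set.InjOn p {k | IsFresh f k} := fun k hk k' hk' he => by
    by_contra hne
    have hkk' : Near (1 + 1) (toZMod (f k)) (toZMod (f k')) :=
      (hnear k).trans (he ▸ (hnear k').symm)
    rcases lt_or_gt_of_ne hne with hlt | hlt
    · exact hk' _ hlt (hkk'.mono (by omega))
    · exact hk _ hlt (hkk'.symm.mono (by omega))
  have hcard : #{k | IsFresh f k} ≤ #{k | ¬ IsFresh f k} :=
    Finset.card_le_card_of_injOn p (fun k hk => by simpa using hp_not_fresh k (by simpa using hk))
      (by simpa [Set.InjOn] using hp_inj)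
  have := Finset.card_filter_add_card_filter_not (s := univ) fun k => IsFresh f k
  simp only [card_univ, Fintype.card_fin] at this
  omega

lemma exists_pointer_of_not_isFresh {f : Fin m → Fin n} {k : Fin m} (hk : ¬ IsFresh f k) :
    ∃ q : Fin m × ℤ, q.1 < k ∧ |q.2| ≤ 2 ∧ toZMod (f k) = toZMod (f q.1) + q.2 := by
  simp only [IsFresh, not_forall, not_not] at hk
  obtain ⟨l, hl, t, ht, he⟩ := hk
  exact ⟨(l, t), hl, ht, he⟩

noncomputable def freshValue (f : Fin m → Fin n) (k : Fin m) : Option (Fin n) :=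
  if IsFresh f k then some (f k) else none

lemma isSome_freshValue (f : Fin m → Fin n) (k : Fin m) :
    (freshValue f k).isSome ↔ IsFresh f k := by
  unfold freshValue
  split_ifs <;> simpa

noncomputable def pointer (f : Fin m → Fin n) (k : Fin m) : Fin m × ℤ :=
  if hk : IsFresh f k then (k, 0) else (exists_pointer_of_not_isFresh hk).choose

lemma pointer_mem (f : Fin m → Fin n) (k : Fin m) :
    pointer f k ∈ (univ : Finset (Fin m)) ×ˢ Icc (-2 : ℤ) 2 := by
  unfold pointer
  split_ifs with hk
  · simp
  · simpa [abs_le] using (exists_pointer_of_not_isFresh hk).choose_spec.2.1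

lemma eq_of_freshValue_eq_of_pointer_eq {f g : Fin m → Fin n}
    (hv : freshValue f = freshValue g) (hp : pointer f = pointer g) : f = g := by
  funext k
  induction k using WellFoundedLT.induction with
  | _ k ih =>
  have hvk := congrFun hv k
  by_cases hk : IsFresh f k
  · by_cases hkg : IsFresh g k
    · simpa [freshValue, hk, hkg] using hvk
    · simp [freshValue, hk, hkg] at hvk
  have hkg : ¬ IsFresh g k := fun hkg => by simp [freshValue, hk, hkg] at hvk
  have hpk : (exists_pointer_of_not_isFresh hk).choose =
      (exists_pointer_of_not_isFresh hkg).choose := by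
    simpa [pointer, hk, hkg] using congrFun hp k
  obtain ⟨-, -, hf⟩ := (exists_pointer_of_not_isFresh hk).choose_spec
  obtain ⟨hlt, -, hg⟩ := (exists_pointer_of_not_isFresh hkg).choose_spec
  apply toZMod_injective
  rw [hf, hg, hpk, ih _ hlt]

lemma card_filter_card_isSome_le {ι α : Type*} [Fintype ι] [DecidableEq ι] [Fintype α]
    (s : ℕ) : #{v : ι → Option α | #{k | (v k).isSome} ≤ s} ≤
      2 ^ Fintype.card ι * (Fintype.card α + 1) ^ s := by
  set supports := (univ : Finset ι).powerset.filter (#· ≤ s)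
  let withSupport (F : Finset ι) : Finset (ι → Option α) :=
    Fintype.piFinset fun k => if k ∈ F then univ else {none}
  calc #{v : ι → Option α | #{k | (v k).isSome} ≤ s}
      ≤ #(supports.biUnion withSupport) := by
        refine card_le_card fun v hv => mem_biUnion.2 ⟨({k | (v k).isSome} : Finset ι),
          by simpa [supports] using hv, Fintype.mem_piFinset.2 fun k => ?_⟩
        split_ifs with hk
        · exact mem_univ _
        · simpa [Option.not_isSome_iff_eq_none] using hk
    _ ≤ ∑ F ∈ supports, #(withSupport F) := card_biUnion_le
    _ ≤ ∑ _F ∈ supports, (Fintype.card α + 1) ^ s := sum_le_sum fun F hF => by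
        simp only [withSupport, Fintype.card_piFinset, apply_ite Finset.card, card_univ,
          Fintype.card_option, card_singleton, prod_ite_mem, univ_inter, prod_const]
        exact Nat.pow_le_pow_right (by omega) (mem_filter.1 hF).2
    _ ≤ 2 ^ Fintype.card ι * (Fintype.card α + 1) ^ s := by
        rw [sum_const, smul_eq_mul]
        gcongr
        exact (card_filter_le _ _).trans (by simp)

theorem card_isPaired_le :
    #{f : Fin m → Fin n | IsPaired f} ≤ 2 ^ m * (n + 1) ^ (m / 2) * (5 * m) ^ m := by
  let codes := ({v : Fin m → Option (Fin n) | #{k | (v k).isSome} ≤ m / 2} : Finset _) ×ˢ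
    Fintype.piFinset fun _ : Fin m => (univ : Finset (Fin m)) ×ˢ Icc (-2 : ℤ) 2
  calc #{f : Fin m → Fin n | IsPaired f}
      ≤ #codes := by
        refine card_le_card_of_injOn (fun f => (freshValue f, pointer f)) (fun f hf => ?_)
          fun f _ g _ hfg => eq_of_freshValue_eq_of_pointer_eq (congrArg Prod.fst hfg)
            (congrArg Prod.snd hfg)
        have := two_mul_card_isFresh_le (by simpa using hf)
        refine mem_product.2 ⟨mem_filter.2 ⟨mem_univ _, ?_⟩,
          Fintype.mem_piFinset.2 (pointer_mem f)⟩
        simp only [isSome_freshValue]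
        omega
    _ ≤ 2 ^ m * (n + 1) ^ (m / 2) * (5 * m) ^ m := by
        rw [card_product, Fintype.card_piFinset, prod_const, card_product, card_univ,
          Fintype.card_fin, Int.card_Icc, show ((2 : ℤ) + 1 - -2).toNat = 5 by rfl, mul_comm m]
        have := card_filter_card_isSome_le (ι := Fin m) (α := Fin n) (m / 2)
        simp only [Fintype.card_fin] at this
        exact Nat.mul_le_mul_right _ this

end Counting

section Hamiltonian

variable {n : ℕ} {h : Matrix (Fin 2 × Fin 2) (Fin 2 × Fin 2) ℂ}

lemma trace_twoSite_mul_twoSite (hn : 2 ≤ n) (i : Fin n)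
    (g g' : Matrix (Fin 2 × Fin 2) (Fin 2 × Fin 2) ℂ) :
    (twoSite n i g * twoSite n i g').trace = 2 ^ (n - 2) * (g * g').trace := by
  rw [← trace_reindex (splitAt hn i), reindex_splitAt_mul, twoSite_eq_reindex hn i g,
    twoSite_eq_reindex hn i g']
  simp [← mul_kronecker_mul, trace_kronecker, card_rest hn, mul_comm]

lemma twoSite_isHermitian (hn : 2 ≤ n) (i : Fin n)
    {g : Matrix (Fin 2 × Fin 2) (Fin 2 × Fin 2) ℂ} (hg : g.IsHermitian) :
    (twoSite n i g).IsHermitian := by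
  rw [twoSite_eq_reindex hn]
  exact IsHermitian.reindex (by simp [IsHermitian, conjTranspose_kronecker, hg.eq]) _

lemma ham_isHermitian (hn : 2 ≤ n) (hh : h.IsHermitian) : (ham h n).IsHermitian :=
  isSelfAdjoint_sum _ fun i _ => twoSite_isHermitian hn i hh

lemma trace_ham_sq (hn : 2 ≤ n)
    (horth : ∀ i j : Fin n, i ≠ j → (twoSite n i h * twoSite n j h).trace = 0) :
    (ham h n ^ 2).trace = n * 2 ^ (n - 2) * (h * h).trace := by
  simp_rw [sq, ham, Finset.sum_mul_sum, trace_sum]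
  rw [Finset.sum_congr rfl fun i _ => Finset.sum_eq_single_of_mem i (Finset.mem_univ i)
    fun j _ hji => horth i j (Ne.symm hji)]
  simp [trace_twoSite_mul_twoSite hn, mul_assoc]

lemma trace_ham_pow_div_eq (hH : (ham h n).IsHermitian) (m : ℕ) :
    (ham h n ^ m).trace / 2 ^ n = (((∑ i, hH.eigenvalues i ^ m) / 2 ^ n : ℝ) : ℂ) := by
  rw [hH.trace_pow]
  push_cast
  rfl

lemma le_trace_ham_pow_div (hn : 2 ≤ n) (hh : h.IsHermitian) {a : ℝ} (ha : (h * h).trace = a)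
    (horth : ∀ i j : Fin n, i ≠ j → (twoSite n i h * twoSite n j h).trace = 0) (k : ℕ) :
    (((a / 4) ^ (k + 1) * (n : ℝ) ^ (k + 1) : ℝ) : ℂ) ≤
      (ham h n ^ (2 * (k + 1))).trace / 2 ^ n := by
  have hH := ham_isHermitian hn hh
  have hsq : ∑ i, hH.eigenvalues i ^ 2 = n * 2 ^ (n - 2) * a := by
    apply RCLike.ofReal_injective (K := ℂ)
    rw [← hH.trace_pow, trace_ham_sq hn horth, ha]
    simp
  have hcard : (#(univ : Finset (Cfg n)) : ℝ) = 2 ^ n := by simp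
  rw [trace_ham_pow_div_eq hH, Complex.real_le_real]
  calc (a / 4) ^ (k + 1) * (n : ℝ) ^ (k + 1)
      = ((∑ i, hH.eigenvalues i ^ 2) / #(univ : Finset (Cfg n))) ^ (k + 1) := by
        rw [hsq, hcard, ← mul_pow, ← pow_sub_mul_pow (2 : ℝ) hn]
        field_simp
        ring
    _ ≤ (∑ i, (hH.eigenvalues i ^ 2) ^ (k + 1)) / #(univ : Finset (Cfg n)) :=
        pow_sum_div_card_le_sum_pow_div_card (fun _ _ => sq_nonneg _) k
    _ = (∑ i, hH.eigenvalues i ^ (2 * (k + 1))) / 2 ^ n := by simp only [hcard, ← pow_mul]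

lemma trace_ham_pow_div_le_norm (hn : 2 ≤ n) (hh : h.IsHermitian) (m : ℕ) :
    (ham h n ^ m).trace / 2 ^ n ≤ ((‖(ham h n ^ m).trace‖ / 2 ^ n : ℝ) : ℂ) := by
  have hH := ham_isHermitian hn hh
  rw [trace_ham_pow_div_eq hH, Complex.real_le_real, hH.trace_pow, RCLike.norm_ofReal]
  exact div_le_div_of_nonneg_right (le_abs_self _) (by positivity)

section LinftyOpNorm

attribute [local instance] Matrix.linftyOpSeminormedAddCommGroup Matrix.linftyOpNormedRing

lemma linfty_opNorm_twoSite_le (hn : 2 ≤ n) (i : Fin n)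
    (g : Matrix (Fin 2 × Fin 2) (Fin 2 × Fin 2) ℂ) : ‖twoSite n i g‖ ≤ ‖g‖ := by
  rw [twoSite_eq_reindex hn, linfty_opNorm_reindex]
  calc _ ≤ ‖g‖ * ‖(1 : Matrix (Rest i → Fin 2) (Rest i → Fin 2) ℂ)‖ :=
        linfty_opNorm_kronecker_le _ _
    _ = ‖g‖ := by rw [norm_one, mul_one]

lemma norm_trace_word_le (hn : 2 ≤ n) {m : ℕ} (f : Fin m → Fin n) :
    ‖(word h f).trace‖ ≤ 2 ^ n * ‖h‖ ^ m := by
  have hword : ‖word h f‖ ≤ ‖h‖ ^ m := by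
    calc ‖word h f‖ ≤ ((List.ofFn fun k => twoSite n (f k) h).map norm).prod :=
          List.norm_prod_le _
      _ = ∏ k, ‖twoSite n (f k) h‖ := by simp [List.map_ofFn, List.prod_ofFn]
      _ ≤ ∏ _k : Fin m, ‖h‖ := Finset.prod_le_prod (fun _ _ => norm_nonneg _)
          fun k _ => linfty_opNorm_twoSite_le hn (f k) h
      _ = ‖h‖ ^ m := by simp
  calc ‖(word h f).trace‖ ≤ Fintype.card (Cfg n) * ‖word h f‖ :=
        norm_trace_le_card_mul_linfty_opNorm _
    _ ≤ 2 ^ n * ‖h‖ ^ m := by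
        rw [Fintype.card_fun, Fintype.card_fin, Fintype.card_fin]
        push_cast
        gcongr

lemma exists_norm_trace_ham_pow_div_le (htr : h.trace = 0) (m : ℕ) :
    ∃ C : ℝ, 0 < C ∧ ∀ n : ℕ, 2 ≤ n →
      ‖(ham h n ^ m).trace‖ / 2 ^ n ≤ C * (n : ℝ) ^ (m / 2) := by
  set K : ℝ := 2 ^ m * 2 ^ (m / 2) * (5 * m) ^ m
  refine ⟨K * ‖h‖ ^ m + 1, by positivity, fun n hn => ?_⟩
  have hcount : (#{f : Fin m → Fin n | IsPaired f} : ℝ) ≤ K * (n : ℝ) ^ (m / 2) := by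
    have hn₁ : (1 : ℝ) ≤ n := by exact_mod_cast (by omega : 1 ≤ n)
    calc (#{f : Fin m → Fin n | IsPaired f} : ℝ)
        ≤ 2 ^ m * ((n : ℝ) + 1) ^ (m / 2) * (5 * m) ^ m := by
          exact_mod_cast card_isPaired_le
      _ ≤ 2 ^ m * (2 * (n : ℝ)) ^ (m / 2) * (5 * m) ^ m := by gcongr; linarith
      _ = K * (n : ℝ) ^ (m / 2) := by ring
  rw [div_le_iff₀ (by positivity), trace_ham_pow_eq_sum_isPaired hn htr]
  calc ‖∑ f : Fin m → Fin n with IsPaired f, (word h f).trace‖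
      ≤ ∑ f : Fin m → Fin n with IsPaired f, ‖(word h f).trace‖ := norm_sum_le _ _
    _ ≤ ∑ f : Fin m → Fin n with IsPaired f, 2 ^ n * ‖h‖ ^ m :=
        sum_le_sum fun f _ => norm_trace_word_le hn f
    _ = #{f : Fin m → Fin n | IsPaired f} * (2 ^ n * ‖h‖ ^ m) := by rw [sum_const, nsmul_eq_mul]
    _ ≤ K * (n : ℝ) ^ (m / 2) * (2 ^ n * ‖h‖ ^ m) := by gcongr
    _ ≤ (K * ‖h‖ ^ m + 1) * (n : ℝ) ^ (m / 2) * 2 ^ n := by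
        nlinarith [show (0 : ℝ) ≤ (n : ℝ) ^ (m / 2) * 2 ^ n by positivity]

end LinftyOpNorm

end Hamiltonian

theorem stmt7_general (h : Matrix (Fin 2 × Fin 2) (Fin 2 × Fin 2) ℂ)
    (hherm : h.IsHermitian) (htr : h.trace = 0) (hne : h ≠ 0)
    (horth : ∀ n : ℕ, 3 ≤ n → ∀ i j : Fin n, i ≠ j →
      (twoSite n i h * twoSite n j h).trace = 0) :
    ∀ m : ℕ, Even m → 0 < m →
      ∃ c C : ℝ, 0 < c ∧ 0 < C ∧ ∀ n : ℕ, 3 ≤ n →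
        ((c * (n : ℝ) ^ (m / 2) : ℝ) : ℂ) ≤ ((ham h n) ^ m).trace / 2 ^ n ∧
        ((ham h n) ^ m).trace / 2 ^ n ≤ ((C * (n : ℝ) ^ (m / 2) : ℝ) : ℂ) := by
  rintro m ⟨r, rfl⟩ hm
  obtain ⟨k, rfl⟩ : ∃ k, r = k + 1 := ⟨r - 1, by omega⟩
  rw [show (k + 1 + (k + 1)) / 2 = k + 1 by omega, ← two_mul]
  obtain ⟨a, ha, hha⟩ := hherm.exists_pos_trace_mul_self hne
  obtain ⟨C, hC, hupper⟩ := exists_norm_trace_ham_pow_div_le htr (2 * (k + 1))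
  refine ⟨(a / 4) ^ (k + 1), C, by positivity, hC, fun n hn => ⟨?_, ?_⟩⟩
  · exact le_trace_ham_pow_div (by omega) hherm hha (horth n hn) k
  · refine (trace_ham_pow_div_le_norm (by omega) hherm _).trans (Complex.real_le_real.2 ?_)
    simpa using hupper n (by omega)

theorem stmt7 (h : Matrix (Fin 2 × Fin 2) (Fin 2 × Fin 2) ℂ)
    (hherm : h.IsHermitian) (htr : h.trace = 0) (hne : h ≠ 0) (hnorm : opNorm h ≤ 1)
    (horth : ∀ n : ℕ, 3 ≤ n → ∀ i j : Fin n, i ≠ j →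
      (twoSite n i h * twoSite n j h).trace = 0) :
    ∀ m : ℕ, Even m → 0 < m →
      ∃ c C : ℝ, 0 < c ∧ 0 < C ∧ ∀ n : ℕ, 3 ≤ n →
        ((c * (n : ℝ) ^ (m / 2) : ℝ) : ℂ) ≤ ((ham h n) ^ m).trace / 2 ^ n ∧
        ((ham h n) ^ m).trace / 2 ^ n ≤ ((C * (n : ℝ) ^ (m / 2) : ℝ) : ℂ) :=
  stmt7_general h hherm htr hne horth
end
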